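/- Let S ⊆ I, let a_i be an agent, let a_j ≠ a_i be another agent, and suppose agent a_j's most preferred item in I is an item o' with o' ∉ S. If there exists a policy under which agent a_i receives exactly the set S, then there exists a policy whose first turn belongs to a_j (so that a_j picks o' at the first turn) under which a_i receives exactly the set S. -/

import Mathlib

open Finset
open scoped Classical

/-- The most preferred item of a nonempty finset w.r.t. a linear order
(greater means more preferred). -/
noncomputable def favorite {ι : Type} (L : LinearOrder ι) (S : Finset ι) (h : S.Nonempty) : ι :=
  @Finset.max' ι L S h

/-- Sequential allocation: process the turns in order; at each turn the agent whose
turn it is picks her most preferred item among the items not yet allocated.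
Returns the list of (agent, item) picks, in order. -/
noncomputable def seqAlloc {n : ℕ} {ι : Type} [DecidableEq ι]
    (P : Fin n → LinearOrder ι) : List (Fin n) → Finset ι → List (Fin n × ι)
  | [], _ => []
  | a :: rest, S =>
    if h : S.Nonempty then
      (a, favorite (P a) S h) :: seqAlloc P rest (S.erase (favorite (P a) S h))
    else []

/-- `M` is the outcome of the policy `π`: every item is picked by the agent that
`M` assigns it to. -/
def IsOutcome {n : ℕ} {ι : Type} [Fintype ι] [DecidableEq ι]
    (P : Fin n → LinearOrder ι) (π : List (Fin n)) (M : ι → Fin n) : Prop :=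
  ∀ o : ι, (M o, o) ∈ seqAlloc P π Finset.univ

/-- The set of items that agent `a` picks under the policy `π`. -/
noncomputable def receives {n : ℕ} {ι : Type} [Fintype ι] [DecidableEq ι]
    (P : Fin n → LinearOrder ι) (π : List (Fin n)) (a : Fin n) : Finset ι :=
  Finset.univ.filter (fun o => (a, o) ∈ seqAlloc P π Finset.univ)

/-- An allocation `M` is Pareto optimal if there is no bijection `f` of the items such
that every agent weakly prefers `f o` to `o` for each item `o` she gets, with at least
one strict preference. -/
def ParetoOptimal {n : ℕ} {ι : Type} (P : Fin n → LinearOrder ι) (M : ι → Fin n) : Prop :=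
  ¬ ∃ f : ι ≃ ι, (∀ o : ι, (P (M o)).le o (f o)) ∧ (∃ o : ι, (P (M o)).lt o (f o))

/-- A policy is balanced if every agent has exactly `k` turns. -/
def BalancedPolicy {n : ℕ} (k : ℕ) (π : List (Fin n)) : Prop :=
  ∀ a : Fin n, π.count a = k

/-- An allocation is balanced if every agent receives exactly `k` items. -/
def BalancedAlloc {n : ℕ} {ι : Type} [Fintype ι] (k : ℕ) (M : ι → Fin n) : Prop :=
  ∀ a : Fin n, (Finset.univ.filter (fun o => M o = a)).card = k

/-- A policy is recursively balanced if it splits into `k` consecutive rounds of `n`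
turns each, every agent having exactly one turn in each round. -/
def RecBalanced (n k : ℕ) (π : List (Fin n)) : Prop :=
  ∃ rounds : List (List (Fin n)), rounds.length = k ∧
    (∀ r ∈ rounds, r.length = n ∧ ∀ a : Fin n, r.count a = 1) ∧
    π = rounds.flatten

/-- A strict alternation policy: every one of the `k` rounds uses the same order `σ`
over the agents. -/
def StrictAlt (n k : ℕ) (π : List (Fin n)) : Prop :=
  ∃ σ : List (Fin n), σ.length = n ∧ (∀ a : Fin n, σ.count a = 1) ∧
    π = (List.replicate k σ).flatten

/-- A balanced alternation policy: odd-numbered rounds use the order `σ` over the agents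
and even-numbered rounds use its reverse. -/
def BalAlt (n k : ℕ) (π : List (Fin n)) : Prop :=
  ∃ σ : List (Fin n), σ.length = n ∧ (∀ a : Fin n, σ.count a = 1) ∧
    π = ((List.range k).map (fun r => if r % 2 = 0 then σ else σ.reverse)).flatten

/-- `p j i` (for `1 ≤ i ≤ k`) is the item ranked `i`-th by agent `j` among the items `M`
allocates to `j`: it is allocated to `j`, and exactly `i - 1` of the items allocated
to `j` are strictly preferred to it by agent `j`. -/
def IsRankingOf {n : ℕ} {ι : Type} [Fintype ι] (P : Fin n → LinearOrder ι) (k : ℕ)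
    (M : ι → Fin n) (p : Fin n → ℕ → ι) : Prop :=
  ∀ (j : Fin n) (i : ℕ), 1 ≤ i → i ≤ k →
    M (p j i) = j ∧
    (Finset.univ.filter (fun o => M o = j ∧ (P j).lt (p j i) o)).card = i - 1

/-- Condition 3: for all `1 ≤ t < s ≤ k` and all agents `j, j'`, agent `j` strictly
prefers `p j t` to `p j' s`. -/
def Cond3 {n : ℕ} {ι : Type} (P : Fin n → LinearOrder ι) (k : ℕ) (p : Fin n → ℕ → ι) : Prop :=
  ∀ t s : ℕ, 1 ≤ t → t < s → s ≤ k → ∀ j j' : Fin n, (P j).lt (p j' s) (p j t)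

/-- The edge relation of the directed graph `G_M`: for odd `i ≤ k` an edge `a → b`
whenever `b` strictly prefers `p a i` to `p b i`, and for even `i ≤ k` an edge `a → b`
whenever `a` strictly prefers `p b i` to `p a i`. -/
def GM {n : ℕ} {ι : Type} (P : Fin n → LinearOrder ι) (k : ℕ) (p : Fin n → ℕ → ι)
    (a b : Fin n) : Prop :=
  (∃ i : ℕ, 1 ≤ i ∧ i ≤ k ∧ i % 2 = 1 ∧ (P b).lt (p b i) (p a i)) ∨
  (∃ i : ℕ, 1 ≤ i ∧ i ≤ k ∧ i % 2 = 0 ∧ (P a).lt (p a i) (p b i))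

/-- The edge relation of the directed graph `H_M`: for each `i ≤ k` an edge `a → b`
whenever `b` strictly prefers `p a i` to `p b i`. -/
def HM {n : ℕ} {ι : Type} (P : Fin n → LinearOrder ι) (k : ℕ) (p : Fin n → ℕ → ι)
    (a b : Fin n) : Prop :=
  ∃ i : ℕ, 1 ≤ i ∧ i ≤ k ∧ (P b).lt (p b i) (p a i)

/-- The `k` most preferred items of agent `j`: those items with fewer than `k` items
strictly preferred to them by `j`. -/
noncomputable def topItems {n : ℕ} {ι : Type} [Fintype ι] (P : Fin n → LinearOrder ι)
    (k : ℕ) (j : Fin n) : Finset ι :=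
  Finset.univ.filter (fun o => (Finset.univ.filter (fun o' => (P j).lt o o')).card < k)

/-- The rank of item `o` in agent `j`'s preference (the most preferred item has rank 1). -/
noncomputable def rankOf {n : ℕ} {ι : Type} [Fintype ι] (P : Fin n → LinearOrder ι)
    (j : Fin n) (o : ι) : ℕ :=
  (Finset.univ.filter (fun o' => (P j).lt o o')).card + 1

/-!
Under any policy of length `|I|` every item is picked, in particular `o'`. Deleting the turn at
which `o'` is picked and putting a turn of `a_j` in front gives a policy of the same length: `a_j`
takes `o'` at once, and every later turn sees the same available items as before except `o'`,
which nobody but the deleted turn wanted, so all other picks are unchanged.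
-/

section Favorite

variable {ι : Type} (L : LinearOrder ι)

lemma favorite_mem (S : Finset ι) (h : S.Nonempty) : favorite L S h ∈ S :=
  @Finset.max'_mem ι L S h

lemma favorite_eq_of_forall_le {S : Finset ι} (h : S.Nonempty) {x : ι} (hx : x ∈ S)
    (hmax : ∀ y ∈ S, L.le y x) : favorite L S h = x := by
  let _ := L
  exact le_antisymm (Finset.max'_le _ h _ hmax) (Finset.le_max' _ _ hx)

lemma favorite_erase_of_ne [DecidableEq ι] {S : Finset ι} {x : ι} (h : S.Nonempty)
    (h' : (S.erase x).Nonempty) (hne : favorite L S h ≠ x) :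
    favorite L (S.erase x) h' = favorite L S h :=
  favorite_eq_of_forall_le L h' (Finset.mem_erase.mpr ⟨hne, favorite_mem L S h⟩)
    fun y hy => @Finset.le_max' ι L S y (Finset.mem_of_mem_erase hy)

end Favorite

section SeqAlloc

variable {n : ℕ} {ι : Type} [DecidableEq ι] (P : Fin n → LinearOrder ι)

lemma seqAlloc_cons (a : Fin n) (l : List (Fin n)) {S : Finset ι} (h : S.Nonempty) :
    seqAlloc P (a :: l) S =
      (a, favorite (P a) S h) :: seqAlloc P l (S.erase (favorite (P a) S h)) := by
  rw [seqAlloc, dif_pos h]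

lemma mem_of_mem_seqAlloc :
    ∀ {l : List (Fin n)} {S : Finset ι} {a : Fin n} {o : ι}, (a, o) ∈ seqAlloc P l S → o ∈ S
  | [], _, _, _, h => by simp [seqAlloc] at h
  | b :: l, S, a, o, h => by
    by_cases hS : S.Nonempty
    · rw [seqAlloc_cons P b l hS, List.mem_cons] at h
      rcases h with h | h
      · rw [(Prod.mk.inj h).2]
        exact favorite_mem (P b) S hS
      · exact Finset.mem_of_mem_erase (mem_of_mem_seqAlloc h)
    · simp [seqAlloc, hS] at h

lemma exists_mem_seqAlloc_of_card_le :
    ∀ {l : List (Fin n)} {S : Finset ι}, S.card ≤ l.length →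
      ∀ o ∈ S, ∃ b, (b, o) ∈ seqAlloc P l S
  | [], S, hle, o, ho => by simp_all
  | a :: l, S, hle, o, ho => by
    have hS : S.Nonempty := ⟨o, ho⟩
    rw [seqAlloc_cons P a l hS]
    by_cases heq : o = favorite (P a) S hS
    · exact ⟨a, heq ▸ List.mem_cons_self⟩
    · have hle' : (S.erase (favorite (P a) S hS)).card ≤ l.length := by
        rw [Finset.card_erase_of_mem (favorite_mem (P a) S hS)]
        simp only [List.length_cons] at hle
        omega
      obtain ⟨b, hb⟩ := exists_mem_seqAlloc_of_card_le hle' o (Finset.mem_erase.mpr ⟨heq, ho⟩)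
      exact ⟨b, List.mem_cons_of_mem _ hb⟩

lemma exists_seqAlloc_erase_eq_filter :
    ∀ {l : List (Fin n)} {S : Finset ι} {o : ι}, (∃ b, (b, o) ∈ seqAlloc P l S) →
      ∃ l' : List (Fin n), l'.length + 1 = l.length ∧
        seqAlloc P l' (S.erase o) = (seqAlloc P l S).filter (fun p => p.2 ≠ o)
  | [], _, _, ⟨_, hb⟩ => by simp [seqAlloc] at hb
  | a :: l, S, o, ⟨b, hb⟩ => by
    have hS : S.Nonempty := ⟨o, mem_of_mem_seqAlloc P hb⟩
    rw [seqAlloc_cons P a l hS] at hb ⊢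
    set f := favorite (P a) S hS
    by_cases hf : f = o
    · refine ⟨l, rfl, ?_⟩
      have hfree : ∀ p ∈ seqAlloc P l (S.erase o), p.2 ≠ o := fun p hp =>
        Finset.ne_of_mem_erase (mem_of_mem_seqAlloc P (a := p.1) hp)
      rw [← hf, List.filter_cons_of_neg (by simp), hf,
        List.filter_eq_self.mpr fun p hp => by simpa using hfree p hp]
    · have hb' : (b, o) ∈ seqAlloc P l (S.erase f) :=
        (List.mem_cons.mp hb).resolve_left fun h => hf (Prod.mk.inj h).2.symm
      obtain ⟨l', hlen, heq⟩ := exists_seqAlloc_erase_eq_filter ⟨b, hb'⟩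
      have hS' : (S.erase o).Nonempty := ⟨f, Finset.mem_erase.mpr ⟨hf, favorite_mem (P a) S hS⟩⟩
      refine ⟨a :: l', by simp [← hlen], ?_⟩
      rw [seqAlloc_cons P a l' hS', favorite_erase_of_ne (P a) hS hS' hf, Finset.erase_right_comm,
        heq, List.filter_cons_of_pos (by simpa using hf)]

end SeqAlloc

theorem first_pick_by_other_agent_general
    {ι : Type} [Fintype ι] [DecidableEq ι] {n k : ℕ}
    (hcard : Fintype.card ι = k * n)
    (P : Fin n → LinearOrder ι) (S : Finset ι) (ai aj : Fin n) (hij : aj ≠ ai) (o' : ι)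
    (htop : ∀ x : ι, (P aj).le x o') (ho'S : o' ∉ S)
    (h : ∃ π : List (Fin n), π.length = k * n ∧ receives P π ai = S) :
    ∃ π : List (Fin n), π.length = k * n ∧ π.head? = some aj ∧ receives P π ai = S := by
  obtain ⟨π, hlen, rfl⟩ := h
  have hpicked : ∃ b, (b, o') ∈ seqAlloc P π univ :=
    exists_mem_seqAlloc_of_card_le P (by rw [card_univ, hcard, hlen]) o' (mem_univ o')
  obtain ⟨π', hlen', hπ'⟩ := exists_seqAlloc_erase_eq_filter P hpicked
  have hfirst : favorite (P aj) univ ⟨o', mem_univ o'⟩ = o' :=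
    favorite_eq_of_forall_le (P aj) _ (mem_univ o') fun y _ => htop y
  refine ⟨aj :: π', by simp [hlen', ← hlen], rfl, ?_⟩
  ext o
  simp only [receives, mem_filter, mem_univ, true_and]
  rw [seqAlloc_cons P aj π' ⟨o', mem_univ o'⟩, hfirst, hπ', List.mem_cons, List.mem_filter]
  constructor
  · rintro (heq | ⟨hmem, -⟩)
    · exact absurd (Prod.ext_iff.mp heq).1.symm hij
    · exact hmem
  · intro hmem
    refine Or.inr ⟨hmem, ?_⟩
    have ho : o ≠ o' := fun ho => ho'S (by simpa [receives, ho] using hmem)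
    simpa using ho

/-- If agent `a_j ≠ a_i` has most preferred item `o' ∉ S`, and some policy
gives `a_i` exactly the set `S`, then some policy whose first turn belongs to `a_j`
also gives `a_i` exactly the set `S`. -/
theorem first_pick_by_other_agent
    {ι : Type} [Fintype ι] [DecidableEq ι] {n k : ℕ} (hn : 0 < n) (hk : 1 ≤ k)
    (hcard : Fintype.card ι = k * n)
    (P : Fin n → LinearOrder ι) (S : Finset ι) (ai aj : Fin n) (hij : aj ≠ ai) (o' : ι)
    (htop : ∀ x : ι, (P aj).le x o') (ho'S : o' ∉ S)
    (h : ∃ π : List (Fin n), π.length = k * n ∧ receives P π ai = S) :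
    ∃ π : List (Fin n), π.length = k * n ∧ π.head? = some aj ∧ receives P π ai = S :=
  first_pick_by_other_agent_general hcard P S ai aj hij o' htop ho'S h
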